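/- Let A ∈ ℝ^{n×n}, B ∈ ℝ^{n×m}, T > 0 and t ∈ [0,T). Let χ_0,…,χ_{N−1} ∈ ℝⁿ and μ_0,…,μ_{N−1} ∈ ℝᵐ, and define χ_k(t) = e^{At} χ_k + (∫₀ᵗ e^{A(t−τ)}B dτ) μ_k. If the (n+m)×N matrix stacking [χ_0 ⋯ χ_{N−1}] over [μ_0 ⋯ μ_{N−1}] has rank n+m, then the (n+m)×N matrix stacking [χ_0(t) ⋯ χ_{N−1}(t)] over [μ_0 ⋯ μ_{N−1}] also has rank n+m. -/

import Mathlib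

namespace Matrix

variable {R : Type*} [CommRing R] {n m k : Type*} [Fintype n] [Fintype m] [DecidableEq m]

theorem fromBlocks_zero_one_mul_of_sumElim (E : Matrix n n R) (G : Matrix n m R)
    (x : k → n → R) (u : k → m → R) :
    fromBlocks E G 0 1 * of (fun i c => Sum.elim (x c) (u c) i) =
      of fun i c => Sum.elim (E *ᵥ x c + G *ᵥ u c) (u c) i := by
  ext (i | j) c <;>
    simp [mul_apply, mulVec, dotProduct, Fintype.sum_sum_type, one_apply]

theorem isUnit_det_fromBlocks_zero_one [DecidableEq n] {E : Matrix n n R} (hE : IsUnit E)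
    (G : Matrix n m R) :
    IsUnit (fromBlocks E G 0 1).det := by
  rw [det_fromBlocks_zero₂₁, det_one, mul_one]
  exact (isUnit_iff_isUnit_det E).mp hE

theorem rank_of_sumElim_mulVec_add [DecidableEq n] [Fintype k] {E : Matrix n n R}
    (hE : IsUnit E) (G : Matrix n m R) (x : k → n → R) (u : k → m → R) :
    (of fun i c => Sum.elim (E *ᵥ x c + G *ᵥ u c) (u c) i).rank =
      (of fun i c => Sum.elim (x c) (u c) i).rank := by
  rw [← fromBlocks_zero_one_mul_of_sumElim,
    rank_mul_eq_right_of_isUnit_det _ _ (isUnit_det_fromBlocks_zero_one hE G)]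

end Matrix

theorem stmt13_general (n m N : ℕ) (A : Matrix (Fin n) (Fin n) ℝ) (B : Matrix (Fin n) (Fin m) ℝ)
    (t : ℝ)
    (χ : Fin N → Fin n → ℝ) (μ : Fin N → Fin m → ℝ)
    (h : (Matrix.of fun (i : Fin n ⊕ Fin m) (k : Fin N) =>
        Sum.elim (fun i' => χ k i') (fun j => μ k j) i).rank = n + m) :
    (Matrix.of fun (i : Fin n ⊕ Fin m) (k : Fin N) =>
        Sum.elim (fun i' =>
            ((NormedSpace.exp (t • A)).mulVec (χ k)
              + (Matrix.of fun (a : Fin n) (b : Fin m) =>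
                  ∫ τ in (0:ℝ)..t, (NormedSpace.exp ((t - τ) • A) * B) a b).mulVec (μ k)) i')
          (fun j => μ k j) i).rank = n + m :=
  (Matrix.rank_of_sumElim_mulVec_add (Matrix.isUnit_exp (t • A)) _ χ μ).trans h

theorem stmt13 (n m N : ℕ) (A : Matrix (Fin n) (Fin n) ℝ) (B : Matrix (Fin n) (Fin m) ℝ)
    (T t : ℝ) (hT : 0 < T) (ht : t ∈ Set.Ico (0:ℝ) T)
    (χ : Fin N → Fin n → ℝ) (μ : Fin N → Fin m → ℝ)
    (h : (Matrix.of fun (i : Fin n ⊕ Fin m) (k : Fin N) =>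
        Sum.elim (fun i' => χ k i') (fun j => μ k j) i).rank = n + m) :
    (Matrix.of fun (i : Fin n ⊕ Fin m) (k : Fin N) =>
        Sum.elim (fun i' =>
            ((NormedSpace.exp (t • A)).mulVec (χ k)
              + (Matrix.of fun (a : Fin n) (b : Fin m) =>
                  ∫ τ in (0:ℝ)..t, (NormedSpace.exp ((t - τ) • A) * B) a b).mulVec (μ k)) i')
          (fun j => μ k j) i).rank = n + m :=
  stmt13_general n m N A B t χ μ h
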